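/- The map F_ε is Lipschitz on Ω with Lipschitz constant at most 2−ε, and its inverse is Lipschitz on Ω with constant at most 1/ε (in particular for fixed ε > 0 it is a bi-Lipschitz homeomorphism of Ω). -/

import Mathlib

/-!
`F_ε` is the radial map `x ↦ φ(‖x‖) • x / ‖x‖` whose profile `φ` is the maximum of the lines
`ε r` and `(2 - ε) r - (2 - 2ε)`, so `φ` is `(2 - ε)`-Lipschitz; its inverse is radial with
profile `ψ = φ⁻¹`, the minimum of the inverse lines, which is `1/ε`-Lipschitz. A radial map inherits
the Lipschitz constant `K` of its profile: writing `x ↦ u x`, `y ↦ v y` with `|u|, |v| ≤ K`,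
`‖u x - v y‖² = (u‖x‖ - v‖y‖)² + 2uv(‖x‖‖y‖ - ⟪x, y⟫)`, and both terms are bounded by `K²` times
the corresponding terms of `‖x - y‖²`.
-/

section Radial

variable {E : Type*} [NormedAddCommGroup E]

theorem norm_smul_sub_smul_le [InnerProductSpace ℝ E] {u v K : ℝ} (x y : E)
    (hu : |u| ≤ K) (hv : |v| ≤ K) (h : |u * ‖x‖ - v * ‖y‖| ≤ K * |‖x‖ - ‖y‖|) :
    ‖u • x - v • y‖ ≤ K * ‖x - y‖ := by
  have hK : 0 ≤ K := (abs_nonneg u).trans hu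
  have expand : ‖u • x - v • y‖ ^ 2
      = (u * ‖x‖ - v * ‖y‖) ^ 2 + 2 * (u * v) * (‖x‖ * ‖y‖ - inner ℝ x y) := by
    rw [norm_sub_sq_real, norm_smul, norm_smul, real_inner_smul_left, real_inner_smul_right,
      Real.norm_eq_abs, Real.norm_eq_abs, mul_pow, mul_pow, sq_abs, sq_abs]
    ring
  have expand_one : ‖x - y‖ ^ 2 = (‖x‖ - ‖y‖) ^ 2 + 2 * (‖x‖ * ‖y‖ - inner ℝ x y) := by
    rw [norm_sub_sq_real]; ring
  have hcs : 0 ≤ ‖x‖ * ‖y‖ - inner ℝ x y := sub_nonneg.2 (real_inner_le_norm x y)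
  have huv : u * v ≤ K ^ 2 :=
    calc u * v ≤ |u| * |v| := by rw [← abs_mul]; exact le_abs_self _
      _ ≤ K ^ 2 := by rw [sq]; exact mul_le_mul hu hv (abs_nonneg v) hK
  have hrad : (u * ‖x‖ - v * ‖y‖) ^ 2 ≤ K ^ 2 * (‖x‖ - ‖y‖) ^ 2 := by
    rw [← sq_abs (‖x‖ - ‖y‖), ← mul_pow]
    exact sq_le_sq' (neg_le_of_abs_le h) (le_of_abs_le h)
  have hsq : ‖u • x - v • y‖ ^ 2 ≤ (K * ‖x - y‖) ^ 2 := by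
    rw [expand, mul_pow, expand_one]
    nlinarith [mul_le_mul_of_nonneg_right huv hcs]
  exact (sq_le_sq₀ (norm_nonneg _) (by positivity)).1 hsq

/-- `x ↦ f ‖x‖ • (x / ‖x‖)`, which is `0` at `0` whatever `f 0` is. -/
noncomputable def radialMap [NormedSpace ℝ E] (f : ℝ → ℝ) (x : E) : E := (f ‖x‖ / ‖x‖) • x

theorem LipschitzWith.abs_div_self_le {f : ℝ → ℝ} {K : NNReal} (hf : LipschitzWith K f)
    (h0 : f 0 = 0) (r : ℝ) : |f r / r| ≤ K := by
  rcases eq_or_ne r 0 with rfl | hr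
  · simp
  · rw [abs_div, div_le_iff₀ (abs_pos.2 hr)]
    simpa [h0, Real.dist_eq] using hf.dist_le_mul r 0

theorem LipschitzWith.radialMap [InnerProductSpace ℝ E] {f : ℝ → ℝ} {K : NNReal}
    (hf : LipschitzWith K f) (h0 : f 0 = 0) : LipschitzWith K (radialMap f : E → E) := by
  refine LipschitzWith.of_dist_le_mul fun x y => ?_
  have hprofile (r : ℝ) : f r / r * r = f r := div_mul_cancel_of_imp fun hr => hr ▸ h0
  rw [dist_eq_norm, dist_eq_norm, _root_.radialMap, _root_.radialMap]
  refine norm_smul_sub_smul_le x y (hf.abs_div_self_le h0 _) (hf.abs_div_self_le h0 _) ?_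
  rw [hprofile, hprofile, ← Real.dist_eq, ← Real.dist_eq]
  exact hf.dist_le_mul _ _

theorem radialMap_radialMap [NormedSpace ℝ E] {f g : ℝ → ℝ} (hg0 : g 0 = 0) {x : E} (hf : 0 ≤ f ‖x‖)
    (hgf : g (f ‖x‖) = ‖x‖) : radialMap g (radialMap f x) = x := by
  rcases eq_or_ne x 0 with rfl | hx
  · simp [radialMap]
  have hx' : 0 < ‖x‖ := norm_pos_iff.2 hx
  have hfx : f ‖x‖ ≠ 0 := fun h => hx'.ne (by rwa [h, hg0] at hgf)
  have hnorm : ‖radialMap f x‖ = f ‖x‖ := by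
    rw [radialMap, norm_smul, Real.norm_eq_abs, abs_div, abs_norm, abs_of_nonneg hf,
      div_mul_cancel₀ _ hx'.ne']
  rw [radialMap, hnorm, hgf, radialMap, smul_smul, div_mul_div_cancel₀ hfx,
    div_self hx'.ne', one_smul]

end Radial

section Profile

variable {ε r : ℝ}

/-- The radial profile of `F_ε`: the two pieces meet at `r = 1`, where the slope increases
from `ε` to `2 - ε`, so the profile is their maximum. -/
noncomputable def profile (ε r : ℝ) : ℝ := max (ε * r) ((2 - ε) * r - (2 - 2 * ε))

/-- The inverse of `profile ε`; inverting the increasing lines turns the maximum into a minimum. -/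
noncomputable def profileInv (ε r : ℝ) : ℝ := min (r / ε) ((r + (2 - 2 * ε)) / (2 - ε))

theorem profile_of_le_one (hε1 : ε ≤ 1) (hr : r ≤ 1) : profile ε r = ε * r :=
  max_eq_left (by nlinarith [mul_nonneg (sub_nonneg.2 hε1) (sub_nonneg.2 hr)])

theorem profile_of_one_le (hε1 : ε ≤ 1) (hr : 1 ≤ r) :
    profile ε r = (2 - ε) * r - (2 - 2 * ε) :=
  max_eq_right (by nlinarith [mul_nonneg (sub_nonneg.2 hε1) (sub_nonneg.2 hr)])

theorem profileInv_of_le_eps (hε0 : 0 < ε) (hε1 : ε ≤ 1) (hr : r ≤ ε) : profileInv ε r = r / ε :=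
  min_eq_left <| by
    rw [div_le_div_iff₀ hε0 (by linarith)]
    nlinarith [mul_nonneg (sub_nonneg.2 hε1) (sub_nonneg.2 hr)]

theorem profileInv_of_eps_le (hε0 : 0 < ε) (hε1 : ε ≤ 1) (hr : ε ≤ r) :
    profileInv ε r = (r + (2 - 2 * ε)) / (2 - ε) :=
  min_eq_right <| by
    rw [div_le_div_iff₀ (by linarith) hε0]
    nlinarith [mul_nonneg (sub_nonneg.2 hε1) (sub_nonneg.2 hr)]

theorem profile_zero (hε1 : ε ≤ 1) : profile ε 0 = 0 := by
  rw [profile_of_le_one hε1 zero_le_one, mul_zero]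

theorem profileInv_zero (hε0 : 0 < ε) (hε1 : ε ≤ 1) : profileInv ε 0 = 0 := by
  rw [profileInv_of_le_eps hε0 hε1 hε0.le, zero_div]

theorem profile_nonneg (hε0 : 0 ≤ ε) (hr : 0 ≤ r) : 0 ≤ profile ε r :=
  le_max_of_le_left (mul_nonneg hε0 hr)

theorem profileInv_nonneg (hε0 : 0 < ε) (hε1 : ε ≤ 1) (hr : 0 ≤ r) : 0 ≤ profileInv ε r :=
  le_min (div_nonneg hr hε0.le) (div_nonneg (by linarith) (by linarith))

theorem leftInverse_profileInv_profile (hε0 : 0 < ε) (hε1 : ε ≤ 1) :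
    Function.LeftInverse (profileInv ε) (profile ε) := by
  intro r
  rcases le_total r 1 with hr | hr
  · rw [profile_of_le_one hε1 hr, profileInv_of_le_eps hε0 hε1 (by nlinarith)]
    field_simp
  · rw [profile_of_one_le hε1 hr, profileInv_of_eps_le hε0 hε1 (by nlinarith)]
    field_simp [show 2 - ε ≠ 0 by linarith]
    ring

theorem rightInverse_profileInv_profile (hε0 : 0 < ε) (hε1 : ε ≤ 1) :
    Function.RightInverse (profileInv ε) (profile ε) := by
  intro r
  rcases le_total r ε with hr | hr
  · rw [profileInv_of_le_eps hε0 hε1 hr, profile_of_le_one hε1 (by rwa [div_le_one hε0])]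
    field_simp
  · rw [profileInv_of_eps_le hε0 hε1 hr,
      profile_of_one_le hε1 (by rw [le_div_iff₀ (by linarith)]; linarith)]
    field_simp [show 2 - ε ≠ 0 by linarith]
    ring

theorem lipschitzWith_profile (hε0 : 0 ≤ ε) (hε1 : ε ≤ 1) :
    LipschitzWith (2 - ε).toNNReal (profile ε) := by
  refine LipschitzWith.of_dist_le_mul fun r s => ?_
  rw [Real.coe_toNNReal _ (by linarith), Real.dist_eq, Real.dist_eq]
  refine (abs_max_sub_max_le_max _ _ _ _).trans (max_le ?_ ?_)
  · rw [← mul_sub, abs_mul, abs_of_nonneg hε0]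
    gcongr
    linarith
  · rw [show (2 - ε) * r - (2 - 2 * ε) - ((2 - ε) * s - (2 - 2 * ε)) = (2 - ε) * (r - s) by ring,
      abs_mul, abs_of_nonneg (by linarith)]

theorem lipschitzWith_profileInv (hε0 : 0 < ε) (hε1 : ε ≤ 1) :
    LipschitzWith ε.toNNReal⁻¹ (profileInv ε) := by
  refine LipschitzWith.of_dist_le_mul fun r s => ?_
  rw [NNReal.coe_inv, Real.coe_toNNReal _ hε0.le, Real.dist_eq, Real.dist_eq]
  refine (abs_min_sub_min_le_max _ _ _ _).trans (max_le ?_ ?_)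
  · rw [← sub_div, abs_div, abs_of_pos hε0, div_eq_inv_mul]
  · rw [show (r + (2 - 2 * ε)) / (2 - ε) - (s + (2 - 2 * ε)) / (2 - ε) = (r - s) / (2 - ε) by ring,
      abs_div, abs_of_pos (show 0 < 2 - ε by linarith), div_eq_inv_mul]
    gcongr
    linarith

theorem radialMap_profile {E : Type*} [NormedAddCommGroup E] [NormedSpace ℝ E]
    (hε1 : ε ≤ 1) (x : E) :
    radialMap (profile ε) x =
      if ‖x‖ ≤ 1 then ε • x else ((2 - ε) * ‖x‖ - (2 - 2 * ε)) • (‖x‖⁻¹ • x) := by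
  rw [radialMap]
  split_ifs with hx
  · rw [profile_of_le_one hε1 hx, mul_div_assoc]
    rcases eq_or_ne x 0 with rfl | hx0
    · simp
    · rw [div_self (norm_ne_zero_iff.2 hx0), mul_one]
  · rw [profile_of_one_le hε1 (not_le.1 hx).le, smul_smul, div_eq_mul_inv]

end Profile

/-- `F_ε` is Lipschitz on `Ω = closedBall 0 2` with constant at most `2 - ε`,
and it has an inverse on `Ω` that is Lipschitz with constant at most `1/ε`;
in particular `F_ε` is a bi-Lipschitz homeomorphism of `Ω`. -/
theorem Feps_biLipschitz
    (n : ℕ) (ε : ℝ) (hε0 : 0 < ε) (hε1 : ε < 1)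
    (Fe : EuclideanSpace ℝ (Fin n) → EuclideanSpace ℝ (Fin n))
    (hFe : ∀ x, Fe x =
      if ‖x‖ ≤ 1 then ε • x
      else ((2 - ε) * ‖x‖ - (2 - 2 * ε)) • (‖x‖⁻¹ • x)) :
    LipschitzOnWith (Real.toNNReal (2 - ε)) Fe (Metric.closedBall 0 2) ∧
    ∃ G : EuclideanSpace ℝ (Fin n) → EuclideanSpace ℝ (Fin n),
      Set.InvOn G Fe (Metric.closedBall 0 2) (Metric.closedBall 0 2) ∧
      LipschitzOnWith (Real.toNNReal ε)⁻¹ G (Metric.closedBall 0 2) := by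
  have hε1 : ε ≤ 1 := hε1.le
  obtain rfl : Fe = radialMap (profile ε) :=
    funext fun x => (hFe x).trans (radialMap_profile hε1 x).symm
  refine ⟨((lipschitzWith_profile hε0.le hε1).radialMap (profile_zero hε1)).lipschitzOnWith,
    radialMap (profileInv ε), ⟨fun x _ => ?_, fun y _ => ?_⟩,
    ((lipschitzWith_profileInv hε0 hε1).radialMap (profileInv_zero hε0 hε1)).lipschitzOnWith⟩
  · exact radialMap_radialMap (profileInv_zero hε0 hε1) (profile_nonneg hε0.le (norm_nonneg x))
      (leftInverse_profileInv_profile hε0 hε1 _)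
  · exact radialMap_radialMap (profile_zero hε1) (profileInv_nonneg hε0 hε1 (norm_nonneg y))
      (rightInverse_profileInv_profile hε0 hε1 _)
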